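/- Let d ≥ 1, δ ≥ 0 and 1 < p⁻ ≤ p⁺ < ∞. For each ε > 0 there exists a constant c_ε ≥ 1, depending only on ε, d, p⁻, p⁺ and δ, such that for every exponent p ∈ [p⁻, p⁺], all matrices A, B ∈ ℝ^{d×d} and every r ≥ 0: ((φ_p)_{|A^sym|})*(r) ≤ c_ε ((φ_p)_{|B^sym|})*(r) + ε |F_p(A) − F_p(B)|². -/

import Mathlib

open MeasureTheory

/-- The shifted N-function `(φ_p)_a(r) = ∫₀^r (δ+a+s)^{p-2} s ds`. -/
noncomputable def phiShift (δ p a r : ℝ) : ℝ :=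
  ∫ s in (0:ℝ)..r, (δ + a + s) ^ (p - 2) * s

/-- The Fenchel conjugate `ψ*(r) = sup_{s ≥ 0} (r·s − ψ(s))`. -/
noncomputable def fconj (ψ : ℝ → ℝ) (r : ℝ) : ℝ :=
  ⨆ s : NNReal, (r * (s : ℝ) - ψ (s : ℝ))

/-- The symmetric part `A^sym := ½(A + Aᵀ)`. -/
noncomputable def msym {d : ℕ} (A : Matrix (Fin d) (Fin d) ℝ) : Matrix (Fin d) (Fin d) ℝ :=
  (2 : ℝ)⁻¹ • (A + A.transpose)

/-- The Frobenius norm of a matrix. -/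
noncomputable def frob {d : ℕ} (A : Matrix (Fin d) (Fin d) ℝ) : ℝ :=
  Real.sqrt (∑ i, ∑ j, (A i j) ^ 2)

/-- `F_p(A) := (δ+|A^sym|)^{(p−2)/2} A^sym`. -/
noncomputable def Fmap {d : ℕ} (δ p : ℝ) (A : Matrix (Fin d) (Fin d) ℝ) :
    Matrix (Fin d) (Fin d) ℝ :=
  ((δ + frob (msym A)) ^ ((p - 2) / 2)) • msym A

/-! Write `γ = δ + |A^sym|` and `β = δ + |B^sym|` for the two shifts. The conjugate of a
shifted N-function is governed by its derivative `φ'_γ(t) = (γ + t)^(p-2) t`: if `φ'_β(t) = r`,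
then `(φ_β)*(r)` is comparable to `r t`, uniformly in `p ∈ [p⁻, p⁺]`, because
`φ'_γ(K t) ≥ K^a φ'_γ(t)` for `K ≥ 1` with `a = min 1 (p⁻ - 1)`. If `γ + t` and `β + t` are within
a bounded ratio, so are `φ'_γ(t)` and `φ'_β(t)`, and `(φ_γ)*(r) ≤ c (φ_β)*(r)` follows. Otherwise
`t` is small compared with `L = max γ β` and one shift is at least four times the other; then
`(φ_γ)*(r)` is a small multiple of `L^p`, while `L^p ≤ 16 |F_p(A) - F_p(B)|²` since
`|F_p(A)| = (δ + |A^sym|)^((p-2)/2) |A^sym|`. -/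

open Set

section Conjugate

variable {f : ℝ → ℝ} (hf : MonotoneOn f (Ici 0)) (hf0 : 0 ≤ f 0)
include hf

lemma MonotoneOn.intervalIntegrable_Ici {s t : ℝ} (hs : 0 ≤ s) (ht : 0 ≤ t) :
    IntervalIntegrable f MeasureTheory.volume s t :=
  (hf.mono fun _ hu => le_trans (le_min hs ht) hu.1).intervalIntegrable

lemma integral_le_mul_of_monotoneOn {s : ℝ} (hs : 0 ≤ s) :
    ∫ u in (0:ℝ)..s, f u ≤ s * f s := by
  have h := intervalIntegral.integral_mono_on hs (hf.intervalIntegrable_Ici le_rfl hs)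
    intervalIntegrable_const fun u hu => hf hu.1 hs hu.2
  simpa using h

include hf0

lemma integral_nonneg_of_monotoneOn {s : ℝ} (hs : 0 ≤ s) : 0 ≤ ∫ u in (0:ℝ)..s, f u :=
  intervalIntegral.integral_nonneg hs fun _ hu => hf0.trans (hf self_mem_Ici hu.1 hu.1)

lemma mul_sub_integral_le {r t s : ℝ} (hr : 0 ≤ r) (ht : 0 ≤ t) (hrt : r ≤ f t) (hs : 0 ≤ s) :
    r * s - ∫ u in (0:ℝ)..s, f u ≤ r * t := by
  rcases le_total s t with hst | hts
  · nlinarith [integral_nonneg_of_monotoneOn hf hf0 hs]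
  · have hsplit := intervalIntegral.integral_add_adjacent_intervals
      (hf.intervalIntegrable_Ici le_rfl ht) (hf.intervalIntegrable_Ici ht hs)
    have htail : (s - t) * f t ≤ ∫ u in t..s, f u := by
      simpa using intervalIntegral.integral_mono_on hts intervalIntegrable_const
        (hf.intervalIntegrable_Ici ht hs) fun u hu => hf ht (ht.trans hu.1) hu.1
    nlinarith [integral_nonneg_of_monotoneOn hf hf0 ht]

lemma fconj_integral_le {r t : ℝ} (hr : 0 ≤ r) (ht : 0 ≤ t) (hrt : r ≤ f t) :
    fconj (fun s => ∫ u in (0:ℝ)..s, f u) r ≤ r * t :=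
  ciSup_le fun s => mul_sub_integral_le hf hf0 hr ht hrt s.2

lemma mul_sub_mul_le_fconj_integral {r t s : ℝ} (hr : 0 ≤ r) (ht : 0 ≤ t) (hrt : r ≤ f t)
    (hs : 0 ≤ s) : r * s - s * f s ≤ fconj (fun s => ∫ u in (0:ℝ)..s, f u) r := by
  have hbdd : BddAbove (range fun x : NNReal => r * x - ∫ u in (0:ℝ)..x, f u) :=
    ⟨r * t, forall_mem_range.2 fun x => mul_sub_integral_le hf hf0 hr ht hrt x.2⟩
  have : r * s - ∫ u in (0:ℝ)..s, f u ≤ fconj (fun s => ∫ u in (0:ℝ)..s, f u) r :=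
    le_ciSup hbdd ⟨s, hs⟩
  linarith [integral_le_mul_of_monotoneOn hf hs]

end Conjugate

lemma Real.rpow_le_rpow_abs_mul_rpow {x y R s : ℝ} (hx : 0 < x) (hy : 0 < y) (hxy : x ≤ R * y)
    (hyx : y ≤ R * x) : x ^ s ≤ R ^ |s| * y ^ s := by
  have hR : 0 < R := pos_of_mul_pos_left (hx.trans_le hxy) hy.le
  rcases le_total 0 s with hs | hs
  · rw [abs_of_nonneg hs, ← Real.mul_rpow hR.le hy.le]
    exact Real.rpow_le_rpow hx.le hxy hs
  · have hyR : y / R ≤ x := (div_le_iff₀' hR).2 hyx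
    calc x ^ s ≤ (y / R) ^ s := Real.rpow_le_rpow_of_nonpos (by positivity) hyR hs
      _ = R ^ |s| * y ^ s := by
        rw [abs_of_nonpos hs, Real.div_rpow hy.le hR.le, Real.rpow_neg hR.le]
        ring

noncomputable def shiftedDeriv (p γ t : ℝ) : ℝ := (γ + t) ^ (p - 2) * t

noncomputable def shiftedPhi (p γ r : ℝ) : ℝ := ∫ s in (0:ℝ)..r, shiftedDeriv p γ s

lemma phiShift_eq_shiftedPhi (δ p a : ℝ) : phiShift δ p a = shiftedPhi p (δ + a) := rfl

section ShiftedDeriv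

variable {p γ : ℝ}

@[simp]
lemma shiftedDeriv_zero : shiftedDeriv p γ 0 = 0 := by simp [shiftedDeriv]

lemma shiftedDeriv_nonneg (hγ : 0 ≤ γ) {t : ℝ} (ht : 0 ≤ t) : 0 ≤ shiftedDeriv p γ t :=
  mul_nonneg (Real.rpow_nonneg (by linarith) _) ht

lemma rpow_mul_shiftedDeriv_le {a : ℝ} (ha1 : a ≤ 1) (hap : a ≤ p - 1) (hγ : 0 ≤ γ) {K t : ℝ}
    (hK : 1 ≤ K) (ht : 0 ≤ t) : K ^ a * shiftedDeriv p γ t ≤ shiftedDeriv p γ (K * t) := by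
  rcases ht.eq_or_lt with rfl | ht
  · simp
  have hKt : t ≤ K * t := le_mul_of_one_le_left ht.le hK
  have hg : 0 ≤ (γ + t) ^ (p - 2) * t := shiftedDeriv_nonneg hγ ht.le
  unfold shiftedDeriv
  rcases le_total 2 p with hp | hp
  · have hbase : (γ + t) ^ (p - 2) ≤ (γ + K * t) ^ (p - 2) :=
      Real.rpow_le_rpow (by linarith) (by linarith) (by linarith)
    have hKa : K ^ a ≤ K := by
      simpa using Real.rpow_le_rpow_of_exponent_le hK ha1
    calc K ^ a * ((γ + t) ^ (p - 2) * t) ≤ K * ((γ + t) ^ (p - 2) * t) :=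
          mul_le_mul_of_nonneg_right hKa hg
      _ ≤ (γ + K * t) ^ (p - 2) * (K * t) := by nlinarith
  · have hbase : (K * (γ + t)) ^ (p - 2) ≤ (γ + K * t) ^ (p - 2) :=
      Real.rpow_le_rpow_of_nonpos (by positivity) (by nlinarith) (by linarith)
    have hKa : K ^ a ≤ K ^ (p - 2) * K := by
      rw [← Real.rpow_add_one (by positivity), show p - 2 + 1 = p - 1 by ring]
      exact Real.rpow_le_rpow_of_exponent_le hK hap
    rw [Real.mul_rpow (by positivity) (by linarith)] at hbase
    calc K ^ a * ((γ + t) ^ (p - 2) * t) ≤ K ^ (p - 2) * K * ((γ + t) ^ (p - 2) * t) :=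
          mul_le_mul_of_nonneg_right hKa hg
      _ = K ^ (p - 2) * (γ + t) ^ (p - 2) * (K * t) := by ring
      _ ≤ (γ + K * t) ^ (p - 2) * (K * t) := mul_le_mul_of_nonneg_right hbase (by positivity)

lemma shiftedDeriv_monotoneOn (hp : 1 ≤ p) (hγ : 0 ≤ γ) :
    MonotoneOn (shiftedDeriv p γ) (Ici 0) := by
  intro u hu v _ huv
  rcases (show (0:ℝ) ≤ u from hu).eq_or_lt with rfl | hu
  · simpa using shiftedDeriv_nonneg hγ (hu.trans huv)
  have h := rpow_mul_shiftedDeriv_le (p := p) zero_le_one (by linarith) hγ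
    ((one_le_div hu).2 huv) hu.le
  rwa [Real.rpow_zero, one_mul, div_mul_cancel₀ _ hu.ne'] at h

lemma continuousOn_shiftedDeriv (hp : 1 < p) (hγ : 0 ≤ γ) :
    ContinuousOn (shiftedDeriv p γ) (Ici 0) := by
  rcases hγ.eq_or_lt with rfl | hγ
  · have heq : EqOn (fun t : ℝ => t ^ (p - 1)) (shiftedDeriv p 0) (Ici 0) := by
      intro t ht
      rcases (show (0:ℝ) ≤ t from ht).eq_or_lt with rfl | ht
      · simp [Real.zero_rpow (by linarith : p - 1 ≠ 0)]
      · rw [shiftedDeriv, zero_add, ← Real.rpow_add_one ht.ne']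
        ring_nf
    exact (continuousOn_id.rpow_const fun _ _ => Or.inr (by linarith)).congr heq.symm
  · exact ((continuousOn_const.add continuousOn_id).rpow_const fun t ht =>
      Or.inl (add_pos_of_pos_of_nonneg hγ ht).ne').mul continuousOn_id

lemma exists_shiftedDeriv_eq (hp : 1 < p) (hγ : 0 ≤ γ) {r : ℝ} (hr : 0 ≤ r) :
    ∃ t, 0 ≤ t ∧ shiftedDeriv p γ t = r := by
  have hg1 : 0 < shiftedDeriv p γ 1 := by
    rw [shiftedDeriv, mul_one]; exact Real.rpow_pos_of_pos (by linarith) _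
  have ha : 0 < min 1 (p - 1) := lt_min one_pos (by linarith)
  obtain ⟨K, hKr, hK1⟩ := (((tendsto_rpow_atTop ha).atTop_mul_const hg1).eventually_ge_atTop r).and
    (Filter.eventually_ge_atTop 1) |>.exists
  have hgK : r ≤ shiftedDeriv p γ K := by
    simpa using hKr.trans (rpow_mul_shiftedDeriv_le (min_le_left _ _) (min_le_right _ _) hγ hK1
      zero_le_one)
  obtain ⟨t, ht, hgt⟩ := intermediate_value_Icc (by linarith : (0:ℝ) ≤ K)
    ((continuousOn_shiftedDeriv hp hγ).mono Icc_subset_Ici_self) ⟨by simpa using hr, hgK⟩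
  exact ⟨t, ht.1, hgt⟩

lemma shiftedDeriv_le_rpow_abs_mul {β t R : ℝ} (hγ : 0 ≤ γ) (hβ : 0 ≤ β) (ht : 0 ≤ t)
    (hβγ : β + t ≤ R * (γ + t)) (hγβ : γ + t ≤ R * (β + t)) :
    shiftedDeriv p β t ≤ R ^ |p - 2| * shiftedDeriv p γ t := by
  rcases ht.eq_or_lt with rfl | ht
  · simp
  rw [shiftedDeriv, shiftedDeriv, ← mul_assoc]
  exact mul_le_mul_of_nonneg_right
    (Real.rpow_le_rpow_abs_mul_rpow (by linarith) (by linarith) hβγ hγβ) ht.le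

end ShiftedDeriv

lemma rpow_abs_sub_two_le {p pp R : ℝ} (hp : 1 < p) (hpp : p ≤ pp) (hR : 1 ≤ R) :
    R ^ |p - 2| ≤ R ^ pp :=
  Real.rpow_le_rpow_of_exponent_le hR (abs_sub_le_iff.2 ⟨by linarith, by linarith⟩)

lemma shiftedDeriv_mul_le_rpow {p pp γ L : ℝ} (hp : 1 < p) (hpp : p ≤ pp) (hγ : 0 ≤ γ)
    (hγL : γ ≤ L) (hL : 0 < L) : shiftedDeriv p γ L * L ≤ 2 ^ pp * L ^ p := by
  have h := Real.rpow_le_rpow_abs_mul_rpow (s := p - 2) (R := 2) (by linarith : 0 < γ + L) hL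
    (by linarith) (by linarith)
  have h2 := rpow_abs_sub_two_le (R := 2) hp hpp one_le_two
  have hLp : L ^ (p - 2) * L * L = L ^ p := by
    rw [← Real.rpow_add_one hL.ne', ← Real.rpow_add_one hL.ne']; ring_nf
  calc shiftedDeriv p γ L * L = (γ + L) ^ (p - 2) * (L * L) := by rw [shiftedDeriv]; ring
    _ ≤ 2 ^ |p - 2| * L ^ (p - 2) * (L * L) := by gcongr
    _ ≤ 2 ^ pp * L ^ (p - 2) * (L * L) := by gcongr
    _ = 2 ^ pp * L ^ p := by rw [← hLp]; ring

section ShiftedConjugate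

variable {p a : ℝ} (ha : 0 < a) (ha1 : a ≤ 1) (hap : a ≤ p - 1) {γ β r t : ℝ}
include ha ha1 hap

lemma div_le_fconj_shiftedPhi (hβ : 0 ≤ β) (ht : 0 ≤ t) (hr : shiftedDeriv p β t = r) :
    r * t / (2 * 2 ^ (1 / a)) ≤ fconj (shiftedPhi p β) r := by
  set K : ℝ := 2 ^ (1 / a)
  have hK1 : 1 ≤ K := Real.one_le_rpow one_le_two (by positivity)
  have hKa : K ^ a = 2 := by
    rw [← Real.rpow_mul zero_le_two, one_div_mul_cancel ha.ne', Real.rpow_one]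
  have hs : 0 ≤ t / K := by positivity
  have hhalf : 2 * shiftedDeriv p β (t / K) ≤ r := by
    have h := rpow_mul_shiftedDeriv_le ha1 hap hβ hK1 hs
    rwa [hKa, mul_div_cancel₀ _ (by positivity), hr] at h
  have hr0 : 0 ≤ r := hr ▸ shiftedDeriv_nonneg hβ ht
  have h := mul_sub_mul_le_fconj_integral (shiftedDeriv_monotoneOn (by linarith) hβ)
    shiftedDeriv_zero.ge hr0 ht hr.ge hs
  have hrt : r * t / (2 * K) = r * (t / K) - t / K * (r / 2) := by field_simp; ring
  rw [hrt]
  exact le_trans (by nlinarith) h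

lemma fconj_shiftedPhi_le_of_comparable {pp R : ℝ} (hγ : 0 ≤ γ) (hβ : 0 ≤ β) (ht : 0 ≤ t)
    (hr : shiftedDeriv p β t = r) (hpp : p ≤ pp) (hR : 1 ≤ R) (hβγ : β + t ≤ R * (γ + t))
    (hγβ : γ + t ≤ R * (β + t)) :
    fconj (shiftedPhi p γ) r ≤ (R ^ pp) ^ (1 / a) * (r * t) := by
  have hC : 1 ≤ (R ^ pp) ^ (1 / a) :=
    Real.one_le_rpow (Real.one_le_rpow hR (by linarith)) (by positivity)
  have hreach : r ≤ shiftedDeriv p γ ((R ^ pp) ^ (1 / a) * t) :=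
    calc r ≤ R ^ |p - 2| * shiftedDeriv p γ t := hr ▸ shiftedDeriv_le_rpow_abs_mul hγ hβ ht hβγ hγβ
      _ ≤ ((R ^ pp) ^ (1 / a)) ^ a * shiftedDeriv p γ t := by
        rw [← Real.rpow_mul (by positivity), one_div_mul_cancel ha.ne', Real.rpow_one]
        exact mul_le_mul_of_nonneg_right (rpow_abs_sub_two_le (by linarith) hpp hR)
          (shiftedDeriv_nonneg hγ ht)
      _ ≤ shiftedDeriv p γ ((R ^ pp) ^ (1 / a) * t) := rpow_mul_shiftedDeriv_le ha1 hap hγ hC ht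
  have h := fconj_integral_le (shiftedDeriv_monotoneOn (by linarith) hγ) shiftedDeriv_zero.ge
    (hr ▸ shiftedDeriv_nonneg hβ ht) (by positivity) hreach
  exact h.trans_eq (by ring)

lemma fconj_shiftedPhi_le_of_le_mul {pp L θ : ℝ} (hγ : 0 ≤ γ) (hβ : 0 ≤ β) (ht : 0 ≤ t)
    (hr : shiftedDeriv p β t = r) (hpp : p ≤ pp) (hL : 0 < L) (hγL : γ ≤ L) (hβL : β ≤ L)
    (hθ : 0 < θ) (hθ1 : θ ≤ 1) (htL : t ≤ θ * L) (hθpp : θ ^ a * 2 ^ pp ≤ 1) :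
    fconj (shiftedPhi p γ) r ≤ θ ^ a * 4 ^ pp * L ^ p := by
  have hmono := shiftedDeriv_monotoneOn (p := p) (by linarith) hβ
  have hθL : shiftedDeriv p β (θ * L) ≤ θ ^ a * shiftedDeriv p β L := by
    have h := rpow_mul_shiftedDeriv_le ha1 hap hβ (one_le_inv₀ hθ |>.2 hθ1)
      (by positivity : 0 ≤ θ * L)
    rwa [Real.inv_rpow hθ.le, inv_mul_cancel_left₀ hθ.ne', inv_mul_le_iff₀ (by positivity)] at h
  have hβγL : shiftedDeriv p β L ≤ 2 ^ pp * shiftedDeriv p γ L :=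
    (shiftedDeriv_le_rpow_abs_mul hγ hβ hL.le (by linarith) (by linarith)).trans
      (mul_le_mul_of_nonneg_right (rpow_abs_sub_two_le (by linarith) hpp one_le_two)
        (shiftedDeriv_nonneg hγ hL.le))
  have hrL : r ≤ θ ^ a * 2 ^ pp * shiftedDeriv p γ L :=
    calc r ≤ shiftedDeriv p β (θ * L) := hr ▸ hmono ht (mem_Ici.2 (by positivity)) htL
      _ ≤ θ ^ a * shiftedDeriv p β L := hθL
      _ ≤ θ ^ a * (2 ^ pp * shiftedDeriv p γ L) := by gcongr
      _ = θ ^ a * 2 ^ pp * shiftedDeriv p γ L := by ring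
  have hg0 := shiftedDeriv_nonneg (p := p) hγ hL.le
  have h := fconj_integral_le (shiftedDeriv_monotoneOn (p := p) (by linarith) hγ)
    shiftedDeriv_zero.ge (hr ▸ shiftedDeriv_nonneg hβ ht) hL.le
    (by nlinarith [mul_le_mul_of_nonneg_right hθpp hg0])
  have h4 : (4 : ℝ) ^ pp = 2 ^ pp * 2 ^ pp := by
    rw [← Real.mul_rpow zero_le_two zero_le_two]; norm_num
  calc fconj (shiftedPhi p γ) r ≤ r * L := h
    _ ≤ θ ^ a * 2 ^ pp * (shiftedDeriv p γ L * L) := by nlinarith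
    _ ≤ θ ^ a * 2 ^ pp * (2 ^ pp * L ^ p) :=
      mul_le_mul_of_nonneg_left (shiftedDeriv_mul_le_rpow (by linarith) hpp hγ hγL hL)
        (by positivity)
    _ = θ ^ a * 4 ^ pp * L ^ p := by rw [h4]; ring

end ShiftedConjugate

lemma add_le_one_add_inv_mul_add {γ β t θ : ℝ} (hγ : 0 ≤ γ) (ht : 0 ≤ t)
    (hθ : 0 < θ) (hθ3 : θ ≤ 1 / 3) (h : θ * max γ β ≤ t ∨ max γ β < 4 * min γ β) :
    β + t ≤ (1 + θ⁻¹) * (γ + t) := by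
  have hβL : β ≤ max γ β := le_max_right γ β
  have hθinv : 3 ≤ θ⁻¹ := by rw [le_inv_comm₀ (by norm_num) hθ]; linarith
  rcases h with h | h
  · have hβt : β ≤ θ⁻¹ * t := by rw [le_inv_mul_iff₀ hθ]; nlinarith
    nlinarith
  · nlinarith [min_le_left γ β]

lemma exists_pos_rpow_mul_le {a M C b : ℝ} (ha : 0 < a) (hM : 0 < M) (hC : 0 < C) (hb : 0 < b) :
    ∃ θ : ℝ, 0 < θ ∧ θ ≤ b ∧ θ ^ a * M ≤ C := by
  refine ⟨min b ((C / M) ^ (1 / a)), lt_min hb (by positivity), min_le_left _ _, ?_⟩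
  have h : min b ((C / M) ^ (1 / a)) ^ a ≤ ((C / M) ^ (1 / a)) ^ a :=
    Real.rpow_le_rpow (by positivity) (min_le_right _ _) ha.le
  rw [← Real.rpow_mul (by positivity), one_div_mul_cancel ha.ne', Real.rpow_one] at h
  rwa [← le_div_iff₀ hM]

theorem exists_fconj_shiftedPhi_le {pm pp ε : ℝ} (hpm : 1 < pm) (hε : 0 < ε) :
    ∃ c, 1 ≤ c ∧ ∀ p, pm ≤ p → p ≤ pp → ∀ γ β r D : ℝ, 0 ≤ γ → 0 ≤ β → 0 ≤ r → 0 ≤ D →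
      (4 * min γ β ≤ max γ β → max γ β ^ p ≤ 16 * D) →
      fconj (shiftedPhi p γ) r ≤ c * fconj (shiftedPhi p β) r + ε * D := by
  set a := min 1 (pm - 1)
  have ha : 0 < a := lt_min one_pos (by linarith)
  obtain ⟨θ, hθ, hθ3, hθa⟩ := exists_pos_rpow_mul_le (M := 4 ^ pp) (C := min 1 (ε / 16)) ha
    (by positivity) (by positivity) (by norm_num : (0 : ℝ) < 1 / 3)
  set R := 1 + θ⁻¹
  have hR : 1 ≤ R := le_add_of_nonneg_right (inv_nonneg.2 hθ.le)
  set c := max 1 (2 * 2 ^ (1 / a) * (R ^ pp) ^ (1 / a))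
  refine ⟨c, le_max_left _ _, fun p hp hpp γ β r D hγ hβ hr hD hbad => ?_⟩
  have hap : a ≤ p - 1 := (min_le_right _ _).trans (by linarith)
  obtain ⟨t, ht, hrt⟩ := exists_shiftedDeriv_eq (p := p) (by linarith) hβ hr
  have hlow := div_le_fconj_shiftedPhi ha (min_le_left _ _) hap hβ ht hrt
  have hlow0 : 0 ≤ fconj (shiftedPhi p β) r := le_trans (by positivity) hlow
  by_cases hsmall : t < θ * max γ β ∧ 4 * min γ β ≤ max γ β
  · have hL : 0 < max γ β := pos_of_mul_pos_right (ht.trans_lt hsmall.1) hθ.le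
    have h2pp : θ ^ a * 2 ^ pp ≤ 1 := by
      have : (2 : ℝ) ^ pp ≤ 4 ^ pp := Real.rpow_le_rpow zero_le_two (by norm_num) (by linarith)
      nlinarith [min_le_left 1 (ε / 16), Real.rpow_nonneg hθ.le a]
    calc fconj (shiftedPhi p γ) r ≤ θ ^ a * 4 ^ pp * max γ β ^ p :=
          fconj_shiftedPhi_le_of_le_mul ha (min_le_left _ _) hap hγ hβ ht hrt hpp hL
            (le_max_left γ β) (le_max_right γ β) hθ (by linarith) hsmall.1.le h2pp
      _ ≤ ε / 16 * (16 * D) :=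
          mul_le_mul (hθa.trans (min_le_right _ _)) (hbad hsmall.2) (by positivity)
            (by positivity)
      _ ≤ c * fconj (shiftedPhi p β) r + ε * D := by
          nlinarith [mul_nonneg (zero_le_one.trans (le_max_left _ _ : 1 ≤ c)) hlow0]
  · rw [not_and_or, not_lt, not_le] at hsmall
    have h := fconj_shiftedPhi_le_of_comparable ha (min_le_left _ _) hap hγ hβ ht hrt hpp hR
      (add_le_one_add_inv_mul_add hγ ht hθ hθ3 hsmall)
      (add_le_one_add_inv_mul_add hβ ht hθ hθ3 (by rwa [max_comm, min_comm]))
    rw [div_le_iff₀ (by positivity)] at hlow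
    calc fconj (shiftedPhi p γ) r ≤ (R ^ pp) ^ (1 / a) * (r * t) := h
      _ ≤ 2 * 2 ^ (1 / a) * (R ^ pp) ^ (1 / a) * fconj (shiftedPhi p β) r := by
        nlinarith [Real.rpow_nonneg (Real.rpow_nonneg (zero_le_one.trans hR) pp) (1 / a)]
      _ ≤ c * fconj (shiftedPhi p β) r := mul_le_mul_of_nonneg_right (le_max_right _ _) hlow0
      _ ≤ c * fconj (shiftedPhi p β) r + ε * D := le_add_of_nonneg_right (mul_nonneg hε.le hD)

lemma Real.rpow_sub_one_mul_le_rpow {x y q : ℝ} (hx : 0 ≤ x) (hxy : x ≤ y) :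
    y ^ (q - 1) * x ≤ y ^ q := by
  rcases (hx.trans hxy).eq_or_lt with rfl | hy
  · simp [le_antisymm hxy hx, Real.rpow_nonneg]
  calc y ^ (q - 1) * x ≤ y ^ (q - 1) * y := by gcongr
    _ = y ^ q := by rw [Real.rpow_sub_one hy.ne', div_mul_cancel₀ _ hy.ne']

lemma rpow_le_sixteen_mul_sq_sub {δ p a b : ℝ} (hδ : 0 ≤ δ) (ha : 0 ≤ a) (hb : 0 ≤ b)
    (hp : 1 < p) (hsep : 4 * min (δ + a) (δ + b) ≤ max (δ + a) (δ + b)) :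
    max (δ + a) (δ + b) ^ p ≤
      16 * ((δ + a) ^ ((p - 2) / 2) * a - (δ + b) ^ ((p - 2) / 2) * b) ^ 2 := by
  wlog hab : a ≤ b generalizing a b
  · rw [max_comm, sub_sq_comm]
    exact this hb ha (by rwa [max_comm, min_comm]) (le_of_not_ge hab)
  rw [min_eq_left (by linarith), max_eq_right (by linarith)] at hsep
  rw [max_eq_right (by linarith)]
  rw [show (p - 2) / 2 = p / 2 - 1 by ring]
  set L := δ + b
  rcases (show 0 ≤ L by positivity).eq_or_lt with hL | hL
  · rw [← hL, Real.zero_rpow (by linarith)]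
    positivity
  have hbig : 3 / 4 * L ^ (p / 2) ≤ L ^ (p / 2 - 1) * b := by
    have hb' : 3 / 4 * L ≤ b := by linarith
    calc 3 / 4 * L ^ (p / 2) = L ^ (p / 2 - 1) * (3 / 4 * L) := by
          rw [Real.rpow_sub_one hL.ne']; field_simp
      _ ≤ L ^ (p / 2 - 1) * b := by gcongr
  have hsmall : (δ + a) ^ (p / 2 - 1) * a ≤ L ^ (p / 2) / 2 := by
    have h4 : (2 : ℝ) ≤ 4 ^ (p / 2) := by
      calc (2 : ℝ) = 4 ^ (1 / 2 : ℝ) := by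
            rw [show (4 : ℝ) = 2 ^ (2 : ℝ) by norm_num, ← Real.rpow_mul zero_le_two]; norm_num
        _ ≤ 4 ^ (p / 2) := Real.rpow_le_rpow_of_exponent_le (by norm_num) (by linarith)
    calc (δ + a) ^ (p / 2 - 1) * a ≤ (δ + a) ^ (p / 2) :=
          Real.rpow_sub_one_mul_le_rpow ha (by linarith)
      _ ≤ (L / 4) ^ (p / 2) := Real.rpow_le_rpow (by positivity) (by linarith) (by linarith)
      _ = L ^ (p / 2) / 4 ^ (p / 2) := Real.div_rpow hL.le (by norm_num) _
      _ ≤ L ^ (p / 2) / 2 := div_le_div_of_nonneg_left (by positivity) two_pos h4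
  have hsq : L ^ p = (L ^ (p / 2)) ^ 2 := by
    rw [← Real.rpow_natCast, ← Real.rpow_mul hL.le]; norm_num
  rw [hsq, sub_sq_comm]
  nlinarith [Real.rpow_nonneg hL.le (p / 2)]

section Frobenius

attribute [local instance] Matrix.frobeniusNormedAddCommGroup Matrix.frobeniusNormedSpace

variable {d : ℕ}

lemma frob_eq_norm (A : Matrix (Fin d) (Fin d) ℝ) : frob A = ‖A‖ := by
  rw [Matrix.frobenius_norm_def, frob, Real.sqrt_eq_rpow]
  simp

lemma frob_Fmap {δ : ℝ} (p : ℝ) (hδ : 0 ≤ δ) (A : Matrix (Fin d) (Fin d) ℝ) :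
    frob (Fmap δ p A) = (δ + frob (msym A)) ^ ((p - 2) / 2) * frob (msym A) := by
  rw [Fmap, frob_eq_norm, frob_eq_norm, norm_smul, Real.norm_eq_abs,
    abs_of_nonneg (Real.rpow_nonneg (by positivity) _)]

lemma sq_sub_frob_le (A B : Matrix (Fin d) (Fin d) ℝ) :
    (frob A - frob B) ^ 2 ≤ frob (A - B) ^ 2 := by
  simp only [frob_eq_norm]
  rw [← sq_abs]
  exact pow_le_pow_left₀ (abs_nonneg _) (abs_norm_sub_norm_le A B) 2

end Frobenius

theorem stmt11_general (d : ℕ) (δ pm pp : ℝ) (hδ : 0 ≤ δ) (hpm : 1 < pm) :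
    ∀ ε : ℝ, 0 < ε → ∃ cε : ℝ, 1 ≤ cε ∧
      ∀ p : ℝ, pm ≤ p → p ≤ pp → ∀ A B : Matrix (Fin d) (Fin d) ℝ, ∀ r : ℝ, 0 ≤ r →
        fconj (phiShift δ p (frob (msym A))) r ≤
          cε * fconj (phiShift δ p (frob (msym B))) r +
            ε * frob (Fmap δ p A - Fmap δ p B) ^ 2 := by
  intro ε hε
  obtain ⟨c, hc1, hc⟩ := exists_fconj_shiftedPhi_le (pp := pp) hpm hε
  refine ⟨c, hc1, fun p hp hpp A B r hr => ?_⟩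
  have ha : 0 ≤ frob (msym A) := Real.sqrt_nonneg _
  have hb : 0 ≤ frob (msym B) := Real.sqrt_nonneg _
  rw [phiShift_eq_shiftedPhi, phiShift_eq_shiftedPhi]
  refine hc p hp hpp _ _ r _ (by positivity) (by positivity) hr (sq_nonneg _) fun hsep => ?_
  calc _ ≤ 16 * (frob (Fmap δ p A) - frob (Fmap δ p B)) ^ 2 := by
        rw [frob_Fmap p hδ, frob_Fmap p hδ]
        exact rpow_le_sixteen_mul_sq_sub hδ ha hb (by linarith) hsep
    _ ≤ 16 * frob (Fmap δ p A - Fmap δ p B) ^ 2 :=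
        mul_le_mul_of_nonneg_left (sq_sub_frob_le _ _) (by norm_num)

theorem stmt11 (d : ℕ) (hd : 1 ≤ d) (δ pm pp : ℝ) (hδ : 0 ≤ δ) (hpm : 1 < pm)
    (hpmpp : pm ≤ pp) :
    ∀ ε : ℝ, 0 < ε → ∃ cε : ℝ, 1 ≤ cε ∧
      ∀ p : ℝ, pm ≤ p → p ≤ pp → ∀ A B : Matrix (Fin d) (Fin d) ℝ, ∀ r : ℝ, 0 ≤ r →
        fconj (phiShift δ p (frob (msym A))) r ≤
          cε * fconj (phiShift δ p (frob (msym B))) r +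
            ε * frob (Fmap δ p A - Fmap δ p B) ^ 2 :=
  stmt11_general d δ pm pp hδ hpm
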